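/- arXiv:2404.08400 — 2 statements merged into one kernel-verified Lean document; each statement's English description precedes it below -/
import Mathlib

section
/- Let T be a tree of order m with diameter d ≥ 2, let ε = ε(T), and let K_n be the complete graph on n ≥ 2 vertices. If rn(T □ K_n) = (mn − 1)(d + ε) − 2nL(T), then there exists an ordering w_0, w_1, ..., w_{mn−1} of V(T □ K_n), with w_t = (u_{i_t}, v_{j_t}), such that: (a) L(u_{i_0}) = L(u_{i_{mn−1}}) = 0; (b) v_{j_t} and v_{j_{t+1}} are distinct for all 0 ≤ t ≤ mn−2; (c) for all 0 ≤ a < b ≤ mn−1, d(u_{i_a}, u_{i_b}) ≥ Σ_{t=a}^{b−1} [L(u_{i_t}) + L(u_{i_{t+1}}) − (d + ε)] + (d + 1). -/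
open SimpleGraph Finset

namespace RadioPaper

/-- A radio labelling of `G`: `|f u - f v| ≥ diam G + 1 - d(u,v)` for all distinct `u v`. -/
def IsRadioLabelling {α : Type*} [Fintype α] (G : SimpleGraph α) (f : α → ℕ) : Prop :=
  ∀ u v : α, u ≠ v → G.diam + 1 ≤ Nat.dist (f u) (f v) + G.dist u v

/-- The span of a labelling: the maximum difference between two labels. -/
noncomputable def spanOf {α : Type*} [Fintype α] (f : α → ℕ) : ℕ :=
  Finset.univ.sup fun p : α × α => Nat.dist (f p.1) (f p.2)

/-- The radio number of `G`: the minimum span of a radio labelling of `G`. -/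
noncomputable def radioNumber {α : Type*} [Fintype α] (G : SimpleGraph α) : ℕ :=
  sInf { k | ∃ f : α → ℕ, IsRadioLabelling G f ∧ spanOf f = k }

variable {V : Type*} [Fintype V]

/-- The weight of `G` from `v`. -/
noncomputable def weight (G : SimpleGraph V) (v : V) : ℕ := ∑ u, G.dist u v

/-- The set of weight centers: vertices minimizing the weight. -/
def weightCenters (G : SimpleGraph V) : Set V := {v | ∀ u, weight G v ≤ weight G u}

/-- The level of a vertex: its distance to the nearest weight center. -/
noncomputable def level (G : SimpleGraph V) (u : V) : ℕ :=
  sInf ((fun x => G.dist u x) '' weightCenters G)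

/-- The total level of `G`. -/
noncomputable def totalLevel (G : SimpleGraph V) : ℕ := ∑ u, level G u

/-- `ε(G) = 1` if `G` has a unique weight center, `0` otherwise. -/
noncomputable def epsilon (G : SimpleGraph V) : ℕ :=
  if (weightCenters G).ncard = 1 then 1 else 0

/-- `x` lies on a shortest (= unique, in a tree) path from `a` to `b`. -/
def onPath (G : SimpleGraph V) (a x b : V) : Prop :=
  G.dist a x + G.dist x b = G.dist a b

/-- `x` is a common ancestor of `u` and `v` (tree rooted at its weight centers). -/
def IsCommonAncestor (G : SimpleGraph V) (x u v : V) : Prop :=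
  (∃ w ∈ weightCenters G, onPath G w x u) ∧ ∃ w ∈ weightCenters G, onPath G w x v

/-- `φ(u,v)`: the maximum level of a common ancestor of `u` and `v`. -/
noncomputable def phi (G : SimpleGraph V) (u v : V) : ℕ :=
  sSup (level G '' {x | IsCommonAncestor G x u v})

open scoped Classical in
/-- `δ(u,v) = 1` iff `G` has two weight centers and the `(u,v)`-path contains both. -/
noncomputable def delta (G : SimpleGraph V) (u v : V) : ℕ :=
  if (weightCenters G).ncard = 2 ∧ ∀ x ∈ weightCenters G, onPath G u x v then 1 else 0

/-- `u` and `v` are in different branches: their path contains exactly one weight center. -/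
def InDifferentBranches (G : SimpleGraph V) (u v : V) : Prop :=
  {x ∈ weightCenters G | onPath G u x v}.ncard = 1

/-- `u` and `v` are in opposite branches: the tree has two weight centers and the
`(u,v)`-path contains both. -/
def InOppositeBranches (G : SimpleGraph V) (u v : V) : Prop :=
  (weightCenters G).ncard = 2 ∧ ∀ x ∈ weightCenters G, onPath G u x v

/-- `u` and `v` are in the same branch: their path contains no weight center. -/
def InSameBranch (G : SimpleGraph V) (u v : V) : Prop :=
  ∀ x ∈ weightCenters G, ¬ onPath G u x v

end RadioPaper

/-!
In an optimal radio labelling of `T □ K_n`, list the vertices `w_0, …, w_{mn-1}` by increasing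
label `F`. For consecutive vertices the radio condition, `d(u,v) ≤ L(u) + L(v) + 1 - ε` and
`d_{K_n} ≤ 1` give `F(t+1) - F(t) ≥ d + ε - L(w_t) - L(w_{t+1})`; summing over `t`,
`rn(T □ K_n) ≥ (mn-1)(d+ε) - 2nL(T) + L(w_0) + L(w_{mn-1})`. Equality forces both end levels
to vanish and every one of these gaps to be tight, and then (b) and (c) are the radio condition
read through the tight gaps.

The inequality `d(u,v) ≤ L(u) + L(v) + 1 - ε` rests on the fact that two distinct weight centers
of a tree are adjacent, which comes from the way the weight changes along an edge `ab`:
`w_T(b) - w_T(a) = 2 |{u : d(u,a) < d(u,b)}| - |V|`.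
-/

namespace SimpleGraph

section Acyclic

variable {W : Type*} {G : SimpleGraph W} {u v w a b x : W}

theorem IsAcyclic.length_eq_dist (hG : G.IsAcyclic) {p : G.Walk u v}
    (hp : p.IsPath) : p.length = G.dist u v := by
  obtain ⟨q, hq, hlen⟩ := p.reachable.exists_path_of_dist
  obtain rfl : p = q := congrArg Subtype.val <| (hG.subsingleton_path u v).elim ⟨p, hp⟩ ⟨q, hq⟩
  exact hlen

theorem IsAcyclic.dist_eq_add_one_of_adj (hG : G.IsAcyclic) {p : G.Walk u a}
    (hp : p.IsPath) (hb : b ∉ p.support) (hab : G.Adj a b) :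
    G.dist u b = G.dist u a + 1 := by
  rw [← hG.length_eq_dist (hp.concat hb hab), Walk.length_concat, hG.length_eq_dist hp]

theorem IsAcyclic.dist_eq_add_one_or_of_adj (hG : G.IsAcyclic) (hr : G.Reachable u a)
    (hab : G.Adj a b) : G.dist u b = G.dist u a + 1 ∨ G.dist u a = G.dist u b + 1 := by
  obtain ⟨p, hp, -⟩ := hr.exists_path_of_dist
  by_cases hb : b ∈ p.support
  · obtain ⟨q, hq, -⟩ := (hr.trans hab.reachable).exists_path_of_dist
    exact .inr <| hG.dist_eq_add_one_of_adj hq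
      (hG.ne_mem_support_of_support_of_adj_of_isPath hp hq hab hb) hab.symm
  · exact .inl <| hG.dist_eq_add_one_of_adj hp hb hab

theorem IsAcyclic.dist_lt_of_adj_of_adj (hG : G.IsAcyclic) (hr : G.Reachable u x)
    (hax : G.Adj a x) (hxb : G.Adj x b) (hab : a ≠ b) (h : G.dist u a < G.dist u x) :
    G.dist u x < G.dist u b := by
  obtain ⟨p, hp, -⟩ := hr.exists_path_of_dist
  have ha : a ∈ p.support := by
    by_contra ha
    have := hG.dist_eq_add_one_of_adj hp ha hax.symm
    omega
  by_contra! hle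
  have hb : b ∈ p.support := by
    by_contra hb'
    have := hG.dist_eq_add_one_of_adj hp hb' hxb
    omega
  exact hab <| (hG.eq_penultimate_of_adj_end hp hax.symm ha).trans
    (hG.eq_penultimate_of_adj_end hp hxb hb).symm

theorem IsAcyclic.dist_getVert_lt_succ (hG : G.IsAcyclic) {p : G.Walk v w}
    (hp : p.IsPath) (hr : G.Reachable u v) {j : ℕ}
    (hj : G.dist u (p.getVert j) < G.dist u (p.getVert (j + 1))) {i : ℕ} (hji : j ≤ i)
    (hi : i < p.length) : G.dist u (p.getVert i) < G.dist u (p.getVert (i + 1)) := by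
  induction i, hji using Nat.le_induction with
  | base => exact hj
  | succ i hji ih =>
    refine hG.dist_lt_of_adj_of_adj (hr.trans ?_) (p.adj_getVert_succ (by omega))
      (p.adj_getVert_succ hi) (fun h => ?_) (ih (by omega))
    · exact (p.take (i + 1)).reachable
    · have := hp.getVert_injOn (show _ ≤ p.length by omega) (show _ ≤ p.length by omega) h
      omega

end Acyclic

section BoxProd

variable {α β : Type*} {G : SimpleGraph α} {H : SimpleGraph β}

theorem dist_boxProd {x y : α × β} (h₁ : G.Reachable x.1 y.1) (h₂ : H.Reachable x.2 y.2) :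
    (G □ H).dist x y = G.dist x.1 y.1 + H.dist x.2 y.2 := by
  rw [dist, edist_boxProd, ENat.toNat_add (edist_ne_top_iff_reachable.mpr h₁)
    (edist_ne_top_iff_reachable.mpr h₂)]
  rfl

theorem ediam_boxProd [Nonempty α] [Nonempty β] : (G □ H).ediam = G.ediam + H.ediam := by
  refine le_antisymm (ediam_le_of_edist_le fun x y => ?_) ?_
  · rw [edist_boxProd]
    exact add_le_add edist_le_ediam edist_le_ediam
  · rw [ediam_def, ediam_def]
    refine ENat.iSup_add_iSup_le fun p q => ?_
    rw [← edist_boxProd (G := G) (H := H) (p.1, q.1) (p.2, q.2)]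
    exact edist_le_ediam

theorem diam_boxProd [Nonempty α] [Nonempty β] (hG : G.ediam ≠ ⊤) (hH : H.ediam ≠ ⊤) :
    (G □ H).diam = G.diam + H.diam := by
  rw [diam, diam, diam, ediam_boxProd, ENat.toNat_add hG hH]

theorem diam_boxProd_top [Finite α] [Nontrivial β] (hG : G.Connected) :
    (G □ (⊤ : SimpleGraph β)).diam = G.diam + 1 := by
  have := hG.nonempty
  rw [diam_boxProd (connected_iff_ediam_ne_top.mp hG) (by simp [ediam_top]), diam_top]

theorem dist_top_le_one (a b : α) : (⊤ : SimpleGraph α).dist a b ≤ 1 := by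
  classical
  rw [dist_top]
  split_ifs <;> simp

end BoxProd

end SimpleGraph

namespace RadioPaper

section Labelling

variable {α : Type*} [Fintype α]

theorem exists_isRadioLabelling (G : SimpleGraph α) : ∃ f, IsRadioLabelling G f := by
  let e := Fintype.equivFin α
  refine ⟨fun x => e x * (G.diam + 1), fun u v huv => ?_⟩
  have : 1 ≤ Nat.dist (e u) (e v) := Nat.dist_pos_of_ne fun h => huv (e.injective (Fin.ext h))
  rw [Nat.dist_mul_right]
  nlinarith

theorem exists_isRadioLabelling_spanOf_eq_radioNumber (G : SimpleGraph α) :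
    ∃ f, IsRadioLabelling G f ∧ spanOf f = radioNumber G := by
  obtain ⟨f, hf⟩ := exists_isRadioLabelling G
  exact Nat.sInf_mem (s := {k | ∃ f, IsRadioLabelling G f ∧ spanOf f = k}) ⟨_, f, hf, rfl⟩

theorem IsRadioLabelling.injective {G : SimpleGraph α} {f : α → ℕ} (hf : IsRadioLabelling G f)
    (hG : G.ediam ≠ ⊤) : Function.Injective f := by
  intro u v huv
  by_contra hne
  have := hf u v hne
  have := G.dist_le_diam hG (u := u) (v := v)
  simp only [huv, Nat.dist_self] at *
  omega

theorem spanOf_eq_sub_of_forall_mem_Icc {f : α → ℕ} {a b : α}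
    (h : ∀ x, f x ∈ Set.Icc (f a) (f b)) : spanOf f = f b - f a := by
  refine le_antisymm (Finset.sup_le fun p _ => ?_) ?_
  · have h₁ := h p.1
    have h₂ := h p.2
    simp only [Set.mem_Icc] at h₁ h₂
    unfold Nat.dist
    omega
  · calc f b - f a ≤ Nat.dist (f b) (f a) := by unfold Nat.dist; omega
      _ ≤ spanOf f :=
        Finset.le_sup (f := fun p : α × α => Nat.dist (f p.1) (f p.2)) (mem_univ (b, a))

theorem exists_bijOn_strictMonoOn [Nonempty α] {β : Type*} [LinearOrder β] {f : α → β}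
    (hf : Function.Injective f) :
    ∃ w : ℕ → α, Set.BijOn w (Set.Iio (Fintype.card α)) Set.univ ∧
      StrictMonoOn (f ∘ w) (Set.Iio (Fintype.card α)) := by
  let := LinearOrder.lift' f hf
  let σ := monoEquivOfFin α rfl
  let w : ℕ → α := fun t => if h : t < Fintype.card α then σ ⟨t, h⟩ else Classical.arbitrary α
  have hw : ∀ t (h : t < Fintype.card α), w t = σ ⟨t, h⟩ := fun t h => dif_pos h
  refine ⟨w, ⟨fun _ _ => trivial, fun s hs t ht hst => ?_, fun x _ => ?_⟩, fun s hs t ht hst => ?_⟩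
  · rw [hw s hs, hw t ht] at hst
    exact congrArg Fin.val (σ.injective hst)
  · exact ⟨σ.symm x, (σ.symm x).2, by rw [hw _ (σ.symm x).2]; simp⟩
  · simp only [Function.comp, hw s hs, hw t ht]
    exact σ.strictMono hst

/-- `w` lists the vertices by increasing label of an optimal radio labelling, and `F t` is the
label of `w t`. -/
theorem exists_ordering_radioNumber_eq {G : SimpleGraph α} (hG : G.Connected) :
    ∃ (w : ℕ → α) (F : ℕ → ℤ), Set.BijOn w (Set.Iio (Fintype.card α)) Set.univ ∧
      (radioNumber G : ℤ) = F (Fintype.card α - 1) - F 0 ∧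
      ∀ s t, s < t → t < Fintype.card α → (G.diam : ℤ) + 1 ≤ F t - F s + G.dist (w s) (w t) := by
  have := hG.nonempty
  obtain ⟨f, hf, hspan⟩ := exists_isRadioLabelling_spanOf_eq_radioNumber G
  obtain ⟨w, hw, hmono⟩ :=
    exists_bijOn_strictMonoOn (hf.injective (SimpleGraph.connected_iff_ediam_ne_top.mp hG))
  have hN : 0 < Fintype.card α := Fintype.card_pos
  have hle : ∀ s t, s ≤ t → t < Fintype.card α → f (w s) ≤ f (w t) := fun s t hst ht =>
    hmono.monotoneOn (Set.mem_Iio.mpr (by omega)) (Set.mem_Iio.mpr ht) hst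
  refine ⟨w, fun t => f (w t), hw, ?_, fun s t hst ht => ?_⟩
  · have hIcc : ∀ x, f x ∈ Set.Icc (f (w 0)) (f (w (Fintype.card α - 1))) := fun x => by
      obtain ⟨k, hk, rfl⟩ := hw.surjOn (Set.mem_univ x)
      exact ⟨hle 0 k k.zero_le hk, hle k _ (Nat.le_sub_one_of_lt hk) (by omega)⟩
    have := hle 0 (Fintype.card α - 1) (Nat.zero_le _) (by omega)
    rw [← hspan, spanOf_eq_sub_of_forall_mem_Icc hIcc]
    dsimp only
    omega
  · have := hf (w s) (w t) (hw.injOn.ne (Set.mem_Iio.mpr (by omega)) (Set.mem_Iio.mpr ht) hst.ne)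
    have hst' := hle s t hst.le ht
    rw [Nat.dist_eq_sub_of_le hst'] at this
    dsimp only
    omega

theorem sum_range_comp_of_bijOn {M : Type*} [AddCommMonoid M] {w : ℕ → α} {N : ℕ}
    (hw : Set.BijOn w (Set.Iio N) Set.univ) (g : α → M) :
    ∑ t ∈ range N, g (w t) = ∑ x, g x :=
  Finset.sum_nbij w (fun _ _ => mem_univ _) (by simpa using hw.injOn) (by simpa using hw.surjOn)
    fun _ _ => rfl

end Labelling

theorem sum_range_sub_sub_add_one (D : ℤ) (L : ℕ → ℤ) (k : ℕ) :
    ∑ t ∈ range k, (D - L t - L (t + 1)) = k * D - 2 * ∑ t ∈ range (k + 1), L t + L 0 + L k := by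
  induction k with
  | zero =>
    rw [sum_range_zero, sum_range_one]
    ring
  | succ k ih =>
    rw [sum_range_succ, ih, sum_range_succ _ (k + 1)]
    push_cast
    ring

theorem sub_eq_sum_Ico_of_sum_range_le {F B : ℕ → ℤ} {k : ℕ}
    (hstep : ∀ t < k, B t ≤ F (t + 1) - F t) (hsum : F k - F 0 ≤ ∑ t ∈ range k, B t)
    {a b : ℕ} (hab : a ≤ b) (hbk : b ≤ k) : F b - F a = ∑ t ∈ Ico a b, B t := by
  have hle : ∀ t ∈ range k, B t ≤ F (t + 1) - F t := fun t ht => hstep t (mem_range.mp ht)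
  have heq := (sum_eq_sum_iff_of_le hle).mp
    (le_antisymm (sum_le_sum hle) (by rwa [sum_range_sub]))
  rw [← sum_Ico_sub F hab]
  exact sum_congr rfl fun t ht => (heq t (by simp only [mem_Ico, mem_range] at ht ⊢; omega)).symm

theorem eq_zero_and_sum_Ico_eq_of_sub_eq {F L : ℕ → ℤ} {D : ℤ} {k : ℕ} (hL : ∀ t, 0 ≤ L t)
    (hstep : ∀ t < k, D - L t - L (t + 1) ≤ F (t + 1) - F t)
    (hsub : F k - F 0 = k * D - 2 * ∑ t ∈ range (k + 1), L t) :
    L 0 = 0 ∧ L k = 0 ∧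
      ∀ a b, a ≤ b → b ≤ k → ∑ t ∈ Ico a b, (L t + L (t + 1) - D) = F a - F b := by
  have hsum := sum_range_sub_sub_add_one D L k
  have hle : F k - F 0 ≥ ∑ t ∈ range k, (D - L t - L (t + 1)) := by
    rw [← sum_range_sub]
    exact sum_le_sum fun t ht => hstep t (mem_range.mp ht)
  have h0 := hL 0
  have hk := hL k
  refine ⟨by omega, by omega, fun a b hab hbk => ?_⟩
  rw [← neg_sub, sub_eq_sum_Ico_of_sum_range_le hstep (by omega) hab hbk, ← sum_neg_distrib]
  exact sum_congr rfl fun t _ => by ring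

theorem exists_ordering_boxProd_top {V : Type*} [Fintype V] {T : SimpleGraph V} (hT : T.Connected)
    {n : ℕ} (hn : 2 ≤ n) :
    ∃ (w : ℕ → V × Fin n) (F : ℕ → ℤ), Set.BijOn w (Set.Iio (Fintype.card V * n)) Set.univ ∧
      (radioNumber (T □ (⊤ : SimpleGraph (Fin n))) : ℤ) = F (Fintype.card V * n - 1) - F 0 ∧
      ∀ s t, s < t → t < Fintype.card V * n → (T.diam : ℤ) + 2 ≤
        F t - F s + T.dist (w s).1 (w t).1 + (⊤ : SimpleGraph (Fin n)).dist (w s).2 (w t).2 := by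
  have := Fin.nontrivial_iff_two_le.mpr hn
  obtain ⟨w, F, hw, hspan, hrad⟩ :=
    exists_ordering_radioNumber_eq (hT.boxProd (SimpleGraph.connected_top (V := Fin n)))
  simp only [Fintype.card_prod, Fintype.card_fin, SimpleGraph.diam_boxProd_top hT] at hw hspan hrad
  refine ⟨w, F, hw, hspan, fun s t hst ht => ?_⟩
  have := hrad s t hst ht
  rw [SimpleGraph.dist_boxProd (hT _ _) (SimpleGraph.connected_top _ _)] at this
  push_cast at this
  linarith

variable {V : Type*} [Fintype V] {T : SimpleGraph V}

theorem weight_sub_weight_of_adj (hT : T.IsTree) {a b : V} (hab : T.Adj a b) :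
    (weight T b : ℤ) - weight T a = 2 * #{u | T.dist u a < T.dist u b} - Fintype.card V := by
  have hstep : ∀ u, (T.dist u b : ℤ) - T.dist u a =
      2 * (if T.dist u a < T.dist u b then 1 else 0) - 1 := fun u => by
    rcases hT.isAcyclic.dist_eq_add_one_or_of_adj (hT.connected u a) hab with h | h <;>
      split_ifs <;> omega
  simp only [weight, Nat.cast_sum, ← Finset.sum_sub_distrib, hstep]
  rw [Finset.sum_sub_distrib, ← Finset.mul_sum, Finset.sum_boole]
  simp

/-- If `c, c'` are weight centers at distance `≥ 2` on a geodesic `c, a, …, b, c'`, each of the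
two disjoint sets `{u | d(u,c) < d(u,a)}` and `{u | d(u,c') < d(u,b)}` contains at least half
of the vertices, yet `a` lies in neither. -/
theorem dist_le_one_of_mem_weightCenters (hT : T.IsTree) {c c' : V}
    (hc : c ∈ weightCenters T) (hc' : c' ∈ weightCenters T) : T.dist c c' ≤ 1 := by
  classical
  by_contra! h
  obtain ⟨p, hp, hlen⟩ := hT.connected.exists_path_of_dist c c'
  set a := p.getVert 1
  set b := p.getVert (p.length - 1)
  have hca : T.Adj c a := by simpa using p.adj_getVert_succ (i := 0) (by omega)
  have hbc' : T.Adj b c' := by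
    simpa [b, Nat.sub_add_cancel (show 1 ≤ p.length by omega)] using
      p.adj_getVert_succ (i := p.length - 1) (by omega)
  have hincr : ∀ u j, T.dist u (p.getVert j) < T.dist u (p.getVert (j + 1)) → j ≤ p.length - 1 →
      T.dist u b < T.dist u c' := fun u j hj hjl => by
    simpa [b, Nat.sub_add_cancel (show 1 ≤ p.length by omega)] using
      hT.isAcyclic.dist_getVert_lt_succ hp (hT.connected u c) hj hjl (by omega)
  have hA := weight_sub_weight_of_adj hT hca
  have hB := weight_sub_weight_of_adj hT hbc'.symm
  set A := ({u | T.dist u c < T.dist u a} : Finset V)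
  set B := ({u | T.dist u c' < T.dist u b} : Finset V)
  have := hc a
  have := hc' b
  have hAB : Disjoint A B := disjoint_left.mpr fun u huA huB => by
    simp only [A, B, mem_filter, mem_univ, true_and] at huA huB
    have := hincr u 0 (by simpa using huA) (Nat.zero_le _)
    omega
  have haA : a ∉ A := by simp [A]
  have haB : a ∉ B := fun haB => by
    have ha2 : a ≠ p.getVert 2 := fun h2 => by
      have := hp.getVert_injOn (show _ ≤ p.length by omega) (show _ ≤ p.length by omega) h2
      omega
    have := hincr a 1 (by simpa only [a, SimpleGraph.dist_self] using
      (hT.connected _ _).pos_dist_of_ne ha2) (by omega)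
    simp only [B, mem_filter, mem_univ, true_and] at haB
    omega
  have hcard : #(A ∪ B) < Fintype.card V :=
    card_lt_univ_of_notMem (x := a) (by simp [haA, haB])
  rw [card_union_of_disjoint hAB] at hcard
  omega

theorem weightCenters_nonempty [Nonempty V] (T : SimpleGraph V) : (weightCenters T).Nonempty := by
  obtain ⟨c, -, hc⟩ := exists_min_image univ (weight T) univ_nonempty
  exact ⟨c, fun u => hc u (mem_univ u)⟩

theorem exists_mem_weightCenters_level_eq [Nonempty V] (T : SimpleGraph V) (u : V) :
    ∃ c ∈ weightCenters T, level T u = T.dist u c := by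
  obtain ⟨c, hc, h⟩ := Nat.sInf_mem ((weightCenters_nonempty T).image (T.dist u))
  exact ⟨c, hc, h.symm⟩

theorem dist_add_epsilon_le_one (hT : T.IsTree) {c c' : V} (hc : c ∈ weightCenters T)
    (hc' : c' ∈ weightCenters T) : T.dist c c' + epsilon T ≤ 1 := by
  unfold epsilon
  split_ifs with h
  · obtain ⟨x, hx⟩ := Set.ncard_eq_one.mp h
    rw [hx, Set.mem_singleton_iff] at hc hc'
    simp [hc, hc']
  · simpa using dist_le_one_of_mem_weightCenters hT hc hc'

theorem dist_add_epsilon_le_level_add_level (hT : T.IsTree) (u v : V) :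
    T.dist u v + epsilon T ≤ level T u + level T v + 1 := by
  have := hT.connected.nonempty
  obtain ⟨c, hc, hu⟩ := exists_mem_weightCenters_level_eq T u
  obtain ⟨c', hc', hv⟩ := exists_mem_weightCenters_level_eq T v
  have := hT.connected.dist_triangle (u := u) (v := c) (w := v)
  have := hT.connected.dist_triangle (u := c) (v := c') (w := v)
  have := dist_add_epsilon_le_one hT hc hc'
  rw [SimpleGraph.dist_comm (u := c') (v := v)] at *
  omega

theorem exists_ordering_of_radioNumber_eq_general {V : Type*} [Fintype V]
    (T : SimpleGraph V) (hT : T.IsTree) (m n : ℕ)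
    (hm : Fintype.card V = m) (hn : 2 ≤ n)
    (hrn : (radioNumber (T □ (⊤ : SimpleGraph (Fin n))) : ℤ) =
      ((m * n : ℤ) - 1) * (T.diam + epsilon T) - 2 * n * totalLevel T) :
    ∃ w : ℕ → V × Fin n, Set.BijOn w (Set.Iio (m * n)) Set.univ ∧
      -- (a)
      level T (w 0).1 = 0 ∧ level T (w (m * n - 1)).1 = 0 ∧
      -- (b)
      (∀ t, t + 1 < m * n → (w t).2 ≠ (w (t + 1)).2) ∧
      -- (c)
      (∀ a b, a < b → b < m * n →
        (∑ t ∈ Finset.Ico a b,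
            ((level T (w t).1 : ℤ) + level T (w (t + 1)).1 - (T.diam + epsilon T)))
          + (T.diam + 1) ≤ (T.dist (w a).1 (w b).1 : ℤ)) := by
  have := hT.connected.nonempty
  obtain ⟨w, F, hw, hspan, hgap⟩ := exists_ordering_boxProd_top hT.connected hn
  have hN1 : 1 ≤ m * n := hm ▸ Nat.mul_pos Fintype.card_pos (by omega)
  have hL := sum_range_comp_of_bijOn hw fun x => (level T x.1 : ℤ)
  rw [hm] at hw hspan hgap hL
  have hlevel := fun s t => dist_add_epsilon_le_level_add_level hT (w s).1 (w t).1
  have hstep : ∀ t < m * n - 1, (T.diam + epsilon T : ℤ) - level T (w t).1 - level T (w (t + 1)).1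
      ≤ F (t + 1) - F t := fun t ht => by
    have := hgap t (t + 1) (by omega) (by omega)
    have := hlevel t (t + 1)
    have := SimpleGraph.dist_top_le_one (w t).2 (w (t + 1)).2
    omega
  obtain ⟨h0, hlast, htight⟩ := eq_zero_and_sum_Ico_eq_of_sub_eq (fun t => by positivity) hstep
    (by rw [Nat.sub_add_cancel hN1, hL, ← hspan, hrn]
        simp [Fintype.sum_prod_type, totalLevel, Finset.mul_sum, Nat.cast_sub hN1, mul_assoc])
  refine ⟨w, hw, Int.natCast_eq_zero.mp h0, Int.natCast_eq_zero.mp hlast, fun t ht hK => ?_,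
    fun a b hab hb => ?_⟩
  · have := hgap t (t + 1) (by omega) ht
    have := htight t (t + 1) (by omega) (by omega)
    have := hlevel t (t + 1)
    rw [hK, SimpleGraph.dist_self, Nat.Ico_succ_singleton, sum_singleton] at *
    omega
  · have := hgap a b hab hb
    have := SimpleGraph.dist_top_le_one (w a).2 (w b).2
    rw [htight a b hab.le (by omega)]
    omega

/-- necessity part of Theorem 3.2: if `rn(T □ K_n) = (mn−1)(d+ε) − 2nL(T)`
then there is an ordering `w_0, …, w_{mn−1}` of `V(T □ K_n)` satisfying (a)–(c). -/
theorem exists_ordering_of_radioNumber_eq {V : Type*} [Fintype V]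
    (T : SimpleGraph V) (hT : T.IsTree) (m n : ℕ)
    (hm : Fintype.card V = m) (hd : 2 ≤ T.diam) (hn : 2 ≤ n)
    (hrn : (radioNumber (T □ (⊤ : SimpleGraph (Fin n))) : ℤ) =
      ((m * n : ℤ) - 1) * (T.diam + epsilon T) - 2 * n * totalLevel T) :
    ∃ w : ℕ → V × Fin n, Set.BijOn w (Set.Iio (m * n)) Set.univ ∧
      -- (a)
      level T (w 0).1 = 0 ∧ level T (w (m * n - 1)).1 = 0 ∧
      -- (b)
      (∀ t, t + 1 < m * n → (w t).2 ≠ (w (t + 1)).2) ∧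
      -- (c)
      (∀ a b, a < b → b < m * n →
        (∑ t ∈ Finset.Ico a b,
            ((level T (w t).1 : ℤ) + level T (w (t + 1)).1 - (T.diam + epsilon T)))
          + (T.diam + 1) ≤ (T.dist (w a).1 (w b).1 : ℤ)) :=
  exists_ordering_of_radioNumber_eq_general T hT m n hm hn hrn

end RadioPaper
end

section
/- Let m ≥ 4 be an even integer and n ≥ 3 an integer, and let P_m be the path on m vertices. Then rn(P_m □ K_n) = (m²n − 2m + 2)/2. -/
open SimpleGraph Finset

namespace RadioPaper

variable {V : Type*} [Fintype V]

/- Write `m = 2c`, so that the diameter is `2c`, and let `L(i)` be the distance from `i` to the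
central edge `{c - 1, c}` of `P_{2c}`. Since any two vertices are at distance at most
`L + L' + 2`, listing the vertices by increasing label forces the `2cn - 1` successive gaps to sum
to at least `(2cn - 1)(2c - 1) - 2 ∑ L`, and `∑ L = n c (c - 1)`. Equality is attained by an
ordering in blocks of `2c` vertices that alternate between the two halves of the path, with the
`K_n` coordinate chosen so that vertices at most two steps apart never share it. -/

section Distance

variable {α β : Type*} {G : SimpleGraph α} {H : SimpleGraph β}

lemma dist_boxProd (hG : G.Preconnected) (hH : H.Preconnected) (x y : α × β) :
    (G □ H).dist x y = G.dist x.1 y.1 + H.dist x.2 y.2 := by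
  rw [SimpleGraph.dist, edist_boxProd, ENat.toNat_add (edist_ne_top_iff_reachable.mpr (hG _ _))
    (edist_ne_top_iff_reachable.mpr (hH _ _))]
  rfl

lemma diam_boxProd [Finite α] [Finite β] (hG : G.Connected) (hH : H.Connected) :
    (G □ H).diam = G.diam + H.diam := by
  have := hG.nonempty
  have := hH.nonempty
  apply le_antisymm
  · obtain ⟨x, y, hxy⟩ := (G □ H).exists_dist_eq_diam
    rw [← hxy, dist_boxProd hG.preconnected hH.preconnected]
    exact add_le_add (dist_le_diam (connected_iff_ediam_ne_top.mp hG))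
      (dist_le_diam (connected_iff_ediam_ne_top.mp hH))
  · obtain ⟨u, v, huv⟩ := G.exists_dist_eq_diam
    obtain ⟨a, b, hab⟩ := H.exists_dist_eq_diam
    rw [← huv, ← hab, ← dist_boxProd hG.preconnected hH.preconnected (u, a) (v, b)]
    exact dist_le_diam (connected_iff_ediam_ne_top.mp (hG.boxProd hH))

end Distance

section PathGraph

variable {m : ℕ}

lemma natDist_le_length_of_walk {i j : Fin m} (w : (pathGraph m).Walk i j) :
    Nat.dist i j ≤ w.length := by
  induction w with
  | nil => simp
  | cons h _ ih =>
    rw [pathGraph_adj] at h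
    rw [Walk.length_cons]
    unfold Nat.dist at *
    omega

lemma pathGraph_dist_le_of_add_eq (i : Fin m) :
    ∀ (d : ℕ) (j : Fin m), (i : ℕ) + d = j → (pathGraph m).dist i j ≤ d
  | 0, j, h => by simp [show i = j from Fin.ext (by omega)]
  | d + 1, j, h => by
    let j' : Fin m := ⟨i + d, by omega⟩
    have hadj : (pathGraph m).Adj j' j := pathGraph_adj.mpr (Or.inl (by simp [j']; omega))
    calc (pathGraph m).dist i j ≤ (pathGraph m).dist i j' + (pathGraph m).dist j' j :=
          hadj.reachable.dist_triangle_right i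
      _ ≤ d + 1 := add_le_add (pathGraph_dist_le_of_add_eq i d j' rfl)
          (dist_eq_one_iff_adj.mpr hadj).le

lemma pathGraph_dist (i j : Fin m) : (pathGraph m).dist i j = Nat.dist i j := by
  wlog hij : i ≤ j generalizing i j
  · rw [dist_comm, Nat.dist_comm, this j i (le_of_not_ge hij)]
  apply le_antisymm
  · rw [Nat.dist_eq_sub_of_le hij]
    exact pathGraph_dist_le_of_add_eq i _ j (by omega)
  · obtain ⟨w, hw⟩ := (pathGraph_preconnected m i j).exists_walk_length_eq_dist
    exact hw ▸ natDist_le_length_of_walk w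

lemma pathGraph_diam (hm : 1 ≤ m) : (pathGraph m).diam = m - 1 := by
  have : Nonempty (Fin m) := ⟨⟨0, hm⟩⟩
  apply le_antisymm
  · obtain ⟨i, j, hij⟩ := (pathGraph m).exists_dist_eq_diam
    rw [← hij, pathGraph_dist]
    unfold Nat.dist
    omega
  · have hconn : (pathGraph m).Connected := by
      obtain ⟨k, rfl⟩ : ∃ k, m = k + 1 := ⟨m - 1, by omega⟩
      exact pathGraph_connected k
    calc m - 1 = (pathGraph m).dist ⟨0, hm⟩ ⟨m - 1, by omega⟩ := by
          rw [pathGraph_dist]; simp [Nat.dist]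
      _ ≤ _ := dist_le_diam (connected_iff_ediam_ne_top.mp hconn)

end PathGraph

section PathTimesComplete

variable {m n : ℕ}

lemma dist_pathGraph_boxProd_top (u v : Fin m × Fin n) :
    (pathGraph m □ (⊤ : SimpleGraph (Fin n))).dist u v =
      Nat.dist u.1 v.1 + if u.2 = v.2 then 0 else 1 := by
  rw [dist_boxProd (pathGraph_preconnected m) preconnected_top, pathGraph_dist, dist_top]

lemma diam_pathGraph_boxProd_top (hm : 1 ≤ m) (hn : 2 ≤ n) :
    (pathGraph m □ (⊤ : SimpleGraph (Fin n))).diam = m := by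
  have : Nontrivial (Fin n) := Fin.nontrivial_iff_two_le.mpr hn
  obtain ⟨k, rfl⟩ : ∃ k, m = k + 1 := ⟨m - 1, by omega⟩
  rw [diam_boxProd (pathGraph_connected k) connected_top, pathGraph_diam hm, diam_top]
  omega

end PathTimesComplete

section Span

variable {α : Type*} [Fintype α]

lemma le_spanOf (f : α → ℕ) (u v : α) : Nat.dist (f u) (f v) ≤ spanOf f :=
  Finset.le_sup (f := fun p : α × α => Nat.dist (f p.1) (f p.2)) (Finset.mem_univ (u, v))

lemma spanOf_eq_of_forall_le {f : α → ℕ} {u w : α} (hu : f u = 0)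
    (hw : ∀ v, f v ≤ f w) : spanOf f = f w := by
  refine le_antisymm (Finset.sup_le fun p _ => ?_) ?_
  · have := hw p.1
    have := hw p.2
    unfold Nat.dist
    omega
  · simpa [hu, Nat.dist_zero_right] using le_spanOf f w u

lemma radioNumber_eq_spanOf {G : SimpleGraph α} {f : α → ℕ}
    (hf : IsRadioLabelling G f) (hmin : ∀ g, IsRadioLabelling G g → spanOf f ≤ spanOf g) :
    radioNumber G = spanOf f :=
  IsLeast.csInf_eq ⟨⟨f, hf, rfl⟩, by rintro _ ⟨g, hg, rfl⟩; exact hmin g hg⟩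

lemma exists_equiv_fin_monotone {β : Type*} [LinearOrder β] (f : α → β) {N : ℕ}
    (hN : Fintype.card α = N) : ∃ g : Fin N ≃ α, Monotone (f ∘ g) :=
  let e := (Fintype.equivFinOfCardEq hN).symm
  ⟨(Tuple.sort (f ∘ e)).trans e, Tuple.monotone_sort (f ∘ e)⟩

theorem card_sub_one_mul_le_spanOf {G : SimpleGraph α} {f : α → ℕ} (hf : IsRadioLabelling G f)
    (L : α → ℕ) (s : ℕ) (hL : ∀ u v, u ≠ v → G.dist u v ≤ L u + L v + s) :
    (Fintype.card α - 1) * (G.diam + 1) ≤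
      spanOf f + 2 * ∑ v, L v + (Fintype.card α - 1) * s := by
  cases hN : Fintype.card α with
  | zero => simp
  | succ M =>
    obtain ⟨g, hg⟩ := exists_equiv_fin_monotone f hN
    have step (i : Fin M) : G.diam + 1 + f (g i.castSucc) ≤
        f (g i.succ) + (L (g i.castSucc) + L (g i.succ)) + s := by
      have hne : g i.castSucc ≠ g i.succ := g.injective.ne Fin.castSucc_lt_succ.ne
      have hrad := hf _ _ hne
      have hmono : f (g i.castSucc) ≤ f (g i.succ) := hg Fin.castSucc_lt_succ.le
      rw [Nat.dist_eq_sub_of_le hmono] at hrad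
      have := hL _ _ hne
      omega
    have hsum := Finset.sum_le_sum fun i (_ : i ∈ Finset.univ) => step i
    simp only [Finset.sum_add_distrib, Finset.sum_const, Finset.card_univ, Fintype.card_fin,
      smul_eq_mul] at hsum
    have hf_ends := Fin.sum_univ_castSucc (fun j => f (g j))
    rw [Fin.sum_univ_succ] at hf_ends
    have hL_first : ∑ v, L v = ∑ i : Fin M, L (g i.castSucc) + L (g (Fin.last M)) := by
      rw [← Fin.sum_univ_castSucc (fun j => L (g j)), Equiv.sum_comp g L]
    have hL_last : ∑ v, L v = L (g 0) + ∑ i : Fin M, L (g i.succ) := by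
      rw [← Fin.sum_univ_succ (fun j => L (g j)), Equiv.sum_comp g L]
    have hspan := le_spanOf f (g (Fin.last M)) (g 0)
    have hmono : f (g 0) ≤ f (g (Fin.last M)) := hg (Fin.zero_le _)
    rw [Nat.dist_comm, Nat.dist_eq_sub_of_le hmono] at hspan
    simp only [Nat.add_sub_cancel, Nat.mul_add, Nat.mul_one]
    omega

end Span

section LowerBound

def centralLevel (c i : ℕ) : ℕ := if i < c then c - 1 - i else i - c

lemma two_mul_sum_centralLevel (c : ℕ) :
    2 * ∑ i ∈ range (2 * c), centralLevel c i = 2 * c * (c - 1) := by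
  have hleft : ∑ i ∈ range c, centralLevel c i = ∑ i ∈ range c, i := by
    rw [← sum_range_reflect]
    exact sum_congr rfl fun i hi => by
      rw [mem_range] at hi
      simp only [centralLevel, if_pos (show c - 1 - i < c by omega)]
      omega
  have hright : ∑ i ∈ range c, centralLevel c (c + i) = ∑ i ∈ range c, i :=
    sum_congr rfl fun i _ => by simp [centralLevel]
  rw [two_mul c, sum_range_add, hleft, hright]
  linarith [sum_range_id_mul_two c]

variable {c n : ℕ}

lemma dist_le_centralLevel_add (u v : Fin (2 * c) × Fin n) :
    (pathGraph (2 * c) □ (⊤ : SimpleGraph (Fin n))).dist u v ≤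
      centralLevel c u.1 + centralLevel c v.1 + 2 := by
  rw [dist_pathGraph_boxProd_top]
  unfold centralLevel Nat.dist
  split_ifs <;> omega

lemma le_spanOf_add_of_isRadioLabelling (hc : 1 ≤ c) (hn : 2 ≤ n)
    {f : Fin (2 * c) × Fin n → ℕ}
    (hf : IsRadioLabelling (pathGraph (2 * c) □ (⊤ : SimpleGraph (Fin n))) f) :
    2 * (c ^ 2 * n) + 1 ≤ spanOf f + 2 * c := by
  have h := card_sub_one_mul_le_spanOf hf (fun v => centralLevel c v.1) 2
    fun u v _ => dist_le_centralLevel_add u v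
  have hsum : 2 * ∑ v : Fin (2 * c) × Fin n, centralLevel c v.1 = n * (2 * c * (c - 1)) := by
    rw [Fintype.sum_prod_type, ← two_mul_sum_centralLevel, ← Fin.sum_univ_eq_sum_range]
    simp only [sum_const, card_univ, Fintype.card_fin, smul_eq_mul, ← mul_sum]
    ring
  rw [hsum, diam_pathGraph_boxProd_top (by omega) hn, Fintype.card_prod, Fintype.card_fin,
    Fintype.card_fin] at h
  obtain ⟨N, hN⟩ : ∃ N, 2 * c * n = N + 1 := ⟨2 * c * n - 1, by
    have := Nat.mul_le_mul (show 2 ≤ 2 * c by omega) (show 1 ≤ n by omega)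
    omega⟩
  obtain ⟨d, rfl⟩ : ∃ d, c = d + 1 := ⟨c - 1, by omega⟩
  rw [hN] at h
  simp only [Nat.add_sub_cancel] at h
  nlinarith

end LowerBound

lemma add_mod_div_cases (k j M : ℕ) (hj : j < M) :
    ((k + j) % M = k % M + j ∧ (k + j) / M = k / M) ∨
      ((k + j) % M + M = k % M + j ∧ (k + j) / M = k / M + 1) := by
  have := Nat.mod_lt k (show 0 < M by omega)
  rw [Nat.add_div (by omega), Nat.add_mod_eq_ite, Nat.div_eq_of_lt hj, Nat.mod_eq_of_lt hj]
  split_ifs <;> omega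

lemma add_mod_ne_add_mod {n a x y : ℕ} (hx : x < n) (hy : y < n) (hxy : x ≠ y) :
    (a + x) % n ≠ (a + y) % n :=
  fun h => hxy ((Nat.ModEq.add_left_cancel' a h).eq_of_lt_of_lt hx hy)

section Construction

/- The `k`-th vertex of the ordering, `k = 2c·b + r` with `r < 2c`, has path coordinate
`c - 1, 2c - 1, c - 2, 2c - 2, …, 0, c` for `r = 0, 1, 2, …, 2c - 1`. `orderLabel` is the partial
sum of the gaps `c, c - 1, c, …, c` within a block and `2c - 1` between blocks, each of which is
`2c + 1` minus the distance between consecutive vertices. -/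

def orderLabel (c k : ℕ) : ℕ := c * k - k % (2 * c) / 2

def orderPathCoord (c k : ℕ) : ℕ :=
  if k % (2 * c) % 2 = 0 then c - 1 - k % (2 * c) / 2 else 2 * c - 1 - k % (2 * c) / 2

/-- The places `r`, `r + 1`, `r + 2` get distinct shifts, and the last place `2c - 1` of a block
does not get shift `1`, which the first place of the next block effectively has. -/
def colorShift (c r : ℕ) : ℕ := if c % 3 = 1 then 2 * r % 3 else r % 3

def orderColorCoord (c n k : ℕ) : ℕ := (k / (2 * c) + colorShift c (k % (2 * c))) % n

variable {c n : ℕ}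

lemma orderLabel_add_mod (hc : 1 ≤ c) (k : ℕ) : orderLabel c k + k % (2 * c) / 2 = c * k := by
  have := Nat.mod_le k (2 * c)
  have := Nat.le_mul_of_pos_left k hc
  unfold orderLabel
  omega

lemma orderLabel_strictMono (hc : 1 ≤ c) : StrictMono (orderLabel c) := by
  refine strictMono_nat_of_lt_succ fun k => ?_
  have := orderLabel_add_mod hc k
  have := orderLabel_add_mod hc (k + 1)
  have := Nat.mod_lt (k + 1) (show 0 < 2 * c by omega)
  rw [Nat.mul_succ] at *
  omega

lemma colorShift_lt (r : ℕ) : colorShift c r < 3 := by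
  unfold colorShift; split <;> omega

lemma orderColorCoord_ne_succ (hc : 1 ≤ c) (hn : 3 ≤ n) (k : ℕ) :
    orderColorCoord c n k ≠ orderColorCoord c n (k + 1) := by
  have hshift (r : ℕ) : colorShift c r < n := (colorShift_lt r).trans_le hn
  have := Nat.mod_lt k (show 0 < 2 * c by omega)
  unfold orderColorCoord
  rcases add_mod_div_cases k 1 (2 * c) (by omega) with ⟨hr, hb⟩ | ⟨hr, hb⟩
  · rw [hr, hb]
    exact add_mod_ne_add_mod (hshift _) (hshift _) (by unfold colorShift; split <;> omega)
  · rw [hb, show (k + 1) % (2 * c) = 0 by omega, add_assoc]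
    exact add_mod_ne_add_mod (hshift _) (by simp [colorShift]; omega)
      (by unfold colorShift; split <;> omega)

lemma orderColorCoord_ne_add_two (hn : 3 ≤ n) {k : ℕ} (hk : k % (2 * c) + 2 < 2 * c) :
    orderColorCoord c n k ≠ orderColorCoord c n (k + 2) := by
  have hshift (r : ℕ) : colorShift c r < n := (colorShift_lt r).trans_le hn
  unfold orderColorCoord
  rcases add_mod_div_cases k 2 (2 * c) (by omega) with ⟨hr, hb⟩ | ⟨hr, hb⟩
  · rw [hr, hb]
    exact add_mod_ne_add_mod (hshift _) (hshift _) (by unfold colorShift; split <;> omega)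
  · omega

lemma orderLabel_radio_condition (hc : 2 ≤ c) (hn : 3 ≤ n) {k k' : ℕ} (hkk' : k < k') :
    2 * c + 1 + orderLabel c k ≤ orderLabel c k' +
      Nat.dist (orderPathCoord c k) (orderPathCoord c k') +
        if orderColorCoord c n k = orderColorCoord c n k' then 0 else 1 := by
  have hr := Nat.mod_lt k (show 0 < 2 * c by omega)
  have hr' := Nat.mod_lt k' (show 0 < 2 * c by omega)
  have hc1 : 1 ≤ c := by omega
  have hlab := orderLabel_add_mod hc1 k
  have hlab' := orderLabel_add_mod hc1 k'
  obtain ⟨j, rfl⟩ : ∃ j, k' = k + j := ⟨k' - k, by omega⟩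
  rw [Nat.mul_add] at hlab'
  rcases (show j = 1 ∨ j = 2 ∨ 3 ≤ j by omega) with rfl | rfl | hj
  · rw [if_neg (orderColorCoord_ne_succ hc1 hn k)]
    have := add_mod_div_cases k 1 (2 * c) (by omega)
    unfold orderPathCoord Nat.dist
    split_ifs <;> omega
  · rcases add_mod_div_cases k 2 (2 * c) (by omega) with ⟨hmod, -⟩ | ⟨hmod, -⟩
    · rw [if_neg (orderColorCoord_ne_add_two hn (by omega))]
      unfold orderPathCoord Nat.dist
      split_ifs <;> omega
    · split_ifs <;> omega
  · have := Nat.mul_le_mul_left c hj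
    split_ifs <;> omega

lemma orderPathCoord_lt (hc : 0 < 2 * c) (k : ℕ) : orderPathCoord c k < 2 * c := by
  unfold orderPathCoord; split <;> omega

def orderVertex (c n : ℕ) (k : Fin (2 * c * n)) : Fin (2 * c) × Fin n :=
  (⟨orderPathCoord c k, orderPathCoord_lt (Nat.pos_of_mul_pos_right k.pos) k⟩,
    ⟨orderColorCoord c n k, Nat.mod_lt _ (Nat.pos_of_mul_pos_left k.pos)⟩)

lemma orderVertex_injective : Function.Injective (orderVertex c n) := by
  intro k k' h
  simp only [orderVertex, Prod.mk.injEq, Fin.ext_iff] at h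
  obtain ⟨hpath, hcolor⟩ := h
  have hpos : 0 < 2 * c := Nat.pos_of_mul_pos_right k.pos
  have hr := Nat.mod_lt k hpos
  have hr' := Nat.mod_lt k' hpos
  have hmod : (k : ℕ) % (2 * c) = k' % (2 * c) := by
    unfold orderPathCoord at hpath
    split_ifs at hpath <;> omega
  have hblock (i : Fin (2 * c * n)) : (i : ℕ) / (2 * c) < n :=
    (Nat.div_lt_iff_lt_mul hpos).mpr (i.isLt.trans_eq (mul_comm _ _))
  unfold orderColorCoord at hcolor
  rw [hmod] at hcolor
  have hdiv : (k : ℕ) / (2 * c) = k' / (2 * c) :=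
    (Nat.ModEq.add_right_cancel' _ hcolor).eq_of_lt_of_lt (hblock k) (hblock k')
  ext
  rw [← Nat.div_add_mod k (2 * c), ← Nat.div_add_mod k' (2 * c), hdiv, hmod]

noncomputable def orderEquiv (c n : ℕ) : Fin (2 * c * n) ≃ Fin (2 * c) × Fin n :=
  Equiv.ofBijective (orderVertex c n)
    ((Fintype.bijective_iff_injective_and_card _).mpr ⟨orderVertex_injective, by simp⟩)

noncomputable def orderLabelling (c n : ℕ) (v : Fin (2 * c) × Fin n) : ℕ :=
  orderLabel c ((orderEquiv c n).symm v)

lemma dist_orderVertex (k k' : Fin (2 * c * n)) :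
    (pathGraph (2 * c) □ (⊤ : SimpleGraph (Fin n))).dist
        (orderVertex c n k) (orderVertex c n k') =
      Nat.dist (orderPathCoord c k) (orderPathCoord c k') +
        if orderColorCoord c n k = orderColorCoord c n k' then 0 else 1 := by
  simp [dist_pathGraph_boxProd_top, orderVertex, Fin.ext_iff]

lemma orderLabelling_radio_of_lt (hc : 2 ≤ c) (hn : 3 ≤ n) {k k' : Fin (2 * c * n)}
    (hkk' : k < k') :
    2 * c + 1 ≤ Nat.dist (orderLabelling c n (orderEquiv c n k))
      (orderLabelling c n (orderEquiv c n k')) +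
      (pathGraph (2 * c) □ (⊤ : SimpleGraph (Fin n))).dist
        (orderEquiv c n k) (orderEquiv c n k') := by
  have h := orderLabel_radio_condition hc hn (n := n) hkk'
  simp only [orderLabelling, Equiv.symm_apply_apply]
  rw [orderEquiv, Equiv.ofBijective_apply, Equiv.ofBijective_apply, dist_orderVertex]
  unfold Nat.dist at h ⊢
  omega

theorem orderLabelling_isRadioLabelling (hc : 2 ≤ c) (hn : 3 ≤ n) :
    IsRadioLabelling (pathGraph (2 * c) □ (⊤ : SimpleGraph (Fin n))) (orderLabelling c n) := by
  intro u v huv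
  rw [diam_pathGraph_boxProd_top (by omega) (by omega)]
  obtain ⟨k, rfl⟩ := (orderEquiv c n).surjective u
  obtain ⟨k', rfl⟩ := (orderEquiv c n).surjective v
  rcases lt_or_gt_of_ne (ne_of_apply_ne _ huv) with h | h
  · exact orderLabelling_radio_of_lt hc hn h
  · rw [Nat.dist_comm, dist_comm]
    exact orderLabelling_radio_of_lt hc hn h

lemma spanOf_orderLabelling (hc : 1 ≤ c) (hn : 1 ≤ n) :
    spanOf (orderLabelling c n) + 2 * c = 2 * (c ^ 2 * n) + 1 := by
  obtain ⟨N, hN⟩ : ∃ N, 2 * c * n = N + 1 := ⟨2 * c * n - 1, by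
    have := Nat.mul_le_mul (show 2 ≤ 2 * c by omega) hn
    omega⟩
  let last : Fin (2 * c * n) := ⟨N, by omega⟩
  have hlast : orderLabelling c n (orderEquiv c n last) = orderLabel c N := by
    simp [orderLabelling, last]
  rw [spanOf_eq_of_forall_le (u := orderEquiv c n ⟨0, by omega⟩) (w := orderEquiv c n last)
    (by simp [orderLabelling, orderLabel]) fun v => ?_, hlast]
  · have hmod : (N + 1) % (2 * c) = 0 := by rw [← hN, Nat.mul_mod_right]
    have := add_mod_div_cases N 1 (2 * c) (by omega)
    have := orderLabel_add_mod hc N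
    have hsq : c * N + c = 2 * (c ^ 2 * n) := by rw [← Nat.mul_add_one, ← hN]; ring
    omega
  · rw [hlast]
    exact (orderLabel_strictMono hc).monotone
      (Nat.le_of_lt_succ (((orderEquiv c n).symm v).isLt.trans_eq hN))

end Construction

/-- for even `m ≥ 4` and `n ≥ 3`,
`rn(P_m □ K_n) = (m²n − 2m + 2)/2` (stated with both sides doubled). -/
theorem radioNumber_path_boxProd_complete_even (m n : ℕ)
    (hm : 4 ≤ m) (hme : Even m) (hn : 3 ≤ n) :
    2 * radioNumber ((SimpleGraph.pathGraph m) □ (⊤ : SimpleGraph (Fin n))) =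
      m ^ 2 * n - 2 * m + 2 := by
  obtain ⟨c, rfl⟩ := hme.two_dvd
  have hc : 2 ≤ c := by omega
  have hspan := spanOf_orderLabelling (by omega : 1 ≤ c) (by omega : 1 ≤ n)
  rw [radioNumber_eq_spanOf (orderLabelling_isRadioLabelling hc hn) fun g hg => by
    have := le_spanOf_add_of_isRadioLabelling (by omega) (by omega) hg
    omega]
  have : (2 * c) ^ 2 * n = 4 * (c ^ 2 * n) := by ring
  omega

end RadioPaper
end
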